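/- arXiv:1801.02253 — 7 statements merged into one kernel-verified Lean document; each statement's English description precedes it below -/
import Mathlib

section
/- Every finite digraph without a directed cycle has a kernel. -/
/-- Every finite digraph without a directed cycle has a kernel. -/
theorem acyclic_digraph_has_kernel {V : Type*} [Fintype V]
    (A : V → V → Prop) (hacyclic : ∀ v : V, ¬ Relation.TransGen A v v) :
    ∃ K : Set V, (∀ u ∈ K, ∀ v ∈ K, ¬ A u v) ∧ (∀ u ∉ K, ∃ v ∈ K, A u v) := by
  classical
  set r : V → V → Prop := fun w v => Relation.TransGen A v w with hr
  have htrans : IsTrans V r := ⟨fun a b c hab hbc => hbc.trans hab⟩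
  have hirr : IsIrrefl V r := ⟨fun a h => hacyclic a h⟩
  have hwf : WellFounded r := Finite.wellFounded_of_trans_of_irrefl r
  have hwf' : WellFounded (fun w v => A v w) :=
    Subrelation.wf (fun h => Relation.TransGen.single h) hwf
  let K : V → Prop := hwf'.fix (C := fun _ => Prop)
    (fun v ih => ∀ w, ∀ h : A v w, ¬ ih w h)
  have hK : ∀ v, K v ↔ ∀ w, A v w → ¬ K w := by
    intro v
    have := hwf'.fix_eq (C := fun _ => Prop)
      (fun v ih => ∀ w, ∀ h : A v w, ¬ ih w h) v
    rw [show K v = _ from this]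
  refine ⟨{v | K v}, ?_, ?_⟩
  · intro u hu v hv hA
    exact (hK u).mp hu v hA hv
  · intro u hu
    by_contra h
    push_neg at h
    exact hu ((hK u).mpr fun w hw hKw => h w hKw hw)
end

section
/- Let C be a clique-cutset of a digraph D = (V, A), and let B, B' be a bipartition of V \ C such that there are no arcs between B and B'. Suppose there exist sets K_1, ..., K_{|C|+1} such that K_i is a kernel of the subdigraph induced by B ∪ (C \ ⋃_{j<i} K_j) for every i ∈ {1,...,|C|+1}, and that the subdigraph induced by B' ∪ (C ∩ ⋃_{j≤|C|} K_j) has a kernel K. Then there exists i ∈ {1,...,|C|+1} such that K ∪ K_i is a kernel of D. -/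
/-- `K` is a kernel of the subdigraph of `(V, A)` induced by `W`. -/
def KernelOn {V : Type*} (A : V → V → Prop) (W K : Set V) : Prop :=
  K ⊆ W ∧ (∀ u ∈ K, ∀ v ∈ K, ¬ A u v) ∧ (∀ u ∈ W, u ∉ K → ∃ v ∈ K, A u v)

/-- Clique-cutset lemma for kernels. -/
theorem clique_cutset_kernel {V : Type*} [Fintype V] [DecidableEq V]
    (A : V → V → Prop) (C : Finset V) (B B' : Set V)
    (hclique : ∀ u ∈ C, ∀ v ∈ C, u ≠ v → A u v ∨ A v u)
    (hpart : B ∪ B' = Set.univ \ ↑C) (hdisj : B ∩ B' = ∅)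
    (hBne : B.Nonempty) (hB'ne : B'.Nonempty)
    (hsep : ∀ u ∈ B, ∀ v ∈ B', ¬ A u v ∧ ¬ A v u)
    (K : ℕ → Set V) (Kk : Set V)
    (hKi : ∀ i ∈ Finset.Icc 1 (C.card + 1),
      KernelOn A (B ∪ (↑C \ ⋃ j ∈ Finset.Ico 1 i, K j)) (K i))
    (hKk : KernelOn A (B' ∪ (↑C ∩ ⋃ j ∈ Finset.Icc 1 C.card, K j)) Kk) :
    ∃ i ∈ Finset.Icc 1 (C.card + 1), KernelOn A Set.univ (Kk ∪ K i) := by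
  classical
  have hBnotC : ∀ x ∈ B, x ∉ (↑C : Set V) := by
    intro x hx
    have hx2 : x ∈ Set.univ \ (↑C : Set V) := by rw [← hpart]; exact Or.inl hx
    exact hx2.2
  have hB'notC : ∀ x ∈ B', x ∉ (↑C : Set V) := by
    intro x hx
    have hx2 : x ∈ Set.univ \ (↑C : Set V) := by rw [← hpart]; exact Or.inr hx
    exact hx2.2
  have hcover : ∀ x : V, x ∉ (↑C : Set V) → x ∈ B ∨ x ∈ B' := by
    intro x hx
    have : x ∈ B ∪ B' := by rw [hpart]; exact ⟨trivial, hx⟩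
    exact this
  have huniq : ∀ (S : Set V), (∀ u ∈ S, ∀ v ∈ S, ¬ A u v) →
      ∀ u ∈ S, u ∈ (↑C : Set V) → ∀ v ∈ S, v ∈ (↑C : Set V) → u = v := by
    intro S hst u hu huC v hv hvC
    by_contra hne
    rcases hclique u (by exact_mod_cast huC) v (by exact_mod_cast hvC) hne with h | h
    · exact hst u hu v hv h
    · exact hst v hv u hu h
  have hKimem : ∀ i ∈ Finset.Icc 1 (C.card + 1), ∀ x ∈ K i,
      x ∈ B ∨ (x ∈ (↑C : Set V) ∧ ∀ j ∈ Finset.Ico 1 i, x ∉ K j) := by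
    intro i hi x hx
    rcases (hKi i hi).1 hx with h | h
    · exact Or.inl h
    · refine Or.inr ⟨h.1, ?_⟩
      intro j hj hxK
      exact h.2 (Set.mem_biUnion hj hxK)
  have hKkmem : ∀ x ∈ Kk,
      x ∈ B' ∨ (x ∈ (↑C : Set V) ∧ ∃ j ∈ Finset.Icc 1 C.card, x ∈ K j) := by
    intro x hx
    rcases hKk.1 hx with h | h
    · exact Or.inl h
    · refine Or.inr ⟨h.1, ?_⟩
      rcases Set.mem_iUnion₂.mp h.2 with ⟨j, hj, hxj⟩
      exact ⟨j, hj, hxj⟩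
  -- absorption works for any admissible index
  have habs : ∀ i ∈ Finset.Icc 1 (C.card + 1), ∀ x, x ∉ Kk ∪ K i →
      ∃ v ∈ Kk ∪ K i, A x v := by
    intro i hi x hx
    have hxKk : x ∉ Kk := fun h => hx (Or.inl h)
    have hxKi : x ∉ K i := fun h => hx (Or.inr h)
    by_cases hxC : x ∈ (↑C : Set V)
    · by_cases hxU : ∀ j ∈ Finset.Ico 1 i, x ∉ K j
      · have hmem : x ∈ B ∪ ((↑C : Set V) \ ⋃ j ∈ Finset.Ico 1 i, K j) := by
          refine Or.inr ⟨hxC, ?_⟩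
          intro hx2
          rcases Set.mem_iUnion₂.mp hx2 with ⟨j, hj, hxj⟩
          exact hxU j hj hxj
        obtain ⟨v, hv, hAv⟩ := (hKi i hi).2.2 x hmem hxKi
        exact ⟨v, Or.inr hv, hAv⟩
      · push_neg at hxU
        obtain ⟨j, hj, hxj⟩ := hxU
        have hj' : j ∈ Finset.Icc 1 C.card := by
          rw [Finset.mem_Ico] at hj
          rw [Finset.mem_Icc] at hi ⊢
          omega
        have hmem : x ∈ B' ∪ ((↑C : Set V) ∩ ⋃ j ∈ Finset.Icc 1 C.card, K j) :=
          Or.inr ⟨hxC, Set.mem_biUnion hj' hxj⟩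
        obtain ⟨v, hv, hAv⟩ := hKk.2.2 x hmem hxKk
        exact ⟨v, Or.inl hv, hAv⟩
    · rcases hcover x hxC with hB | hB'
      · obtain ⟨v, hv, hAv⟩ := (hKi i hi).2.2 x (Or.inl hB) hxKi
        exact ⟨v, Or.inr hv, hAv⟩
      · obtain ⟨v, hv, hAv⟩ := hKk.2.2 x (Or.inl hB') hxKk
        exact ⟨v, Or.inl hv, hAv⟩
  -- there is an index whose kernel avoids C
  have hexI : ∃ i ∈ Finset.Icc 1 (C.card + 1), ∀ x ∈ K i, x ∉ (↑C : Set V) := by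
    by_contra hcon
    push_neg at hcon
    set F : ℕ → Finset V := fun i => C.filter (fun x => ∀ j ∈ Finset.Ico 1 i, x ∉ K j)
      with hF
    have hFmem : ∀ i x, x ∈ F i ↔ x ∈ C ∧ ∀ j ∈ Finset.Ico 1 i, x ∉ K j := by
      intro i x
      simp [hF]
    have hwit : ∀ i ∈ Finset.Icc 1 (C.card + 1), ∃ c, c ∈ K i ∧ c ∈ F i := by
      intro i hi
      obtain ⟨c, hcK, hcC⟩ := hcon i hi
      refine ⟨c, hcK, ?_⟩
      rcases hKimem i hi c hcK with h | h
      · exact absurd hcC (hBnotC c h)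
      · exact (hFmem i c).mpr ⟨by exact_mod_cast hcC, h.2⟩
    have hcard : ∀ m, m ≤ C.card → (F (1 + m)).card + m ≤ C.card := by
      intro m
      induction m with
      | zero =>
        intro _
        have : F (1 + 0) ⊆ C := fun x hx => ((hFmem _ x).mp hx).1
        simpa using Finset.card_le_card this
      | succ m ih =>
        intro hm
        have hm' := ih (Nat.le_of_succ_le hm)
        obtain ⟨c, hcK, hcF⟩ := hwit (1 + m) (by rw [Finset.mem_Icc]; omega)
        have hsub : F (1 + (m + 1)) ⊆ (F (1 + m)).erase c := by
          intro x hx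
          rw [hFmem] at hx
          refine Finset.mem_erase.mpr ⟨?_, (hFmem _ x).mpr ⟨hx.1, ?_⟩⟩
          · rintro rfl
            exact hx.2 (1 + m) (by rw [Finset.mem_Ico]; omega) hcK
          · intro j hj
            refine hx.2 j ?_
            rw [Finset.mem_Ico] at hj ⊢
            omega
        have h1 := Finset.card_le_card hsub
        rw [Finset.card_erase_of_mem hcF] at h1
        have h2 : 1 ≤ (F (1 + m)).card := Finset.card_pos.mpr ⟨c, hcF⟩
        omega
    have hfinal := hcard C.card le_rfl
    obtain ⟨c, hcK, hcF⟩ := hwit (C.card + 1) (by rw [Finset.mem_Icc]; omega)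
    have hz : (F (1 + C.card)).card = 0 := by omega
    have he : F (1 + C.card) = ∅ := Finset.card_eq_zero.mp hz
    rw [Nat.add_comm 1 C.card] at he
    rw [he] at hcF
    exact absurd hcF (Finset.notMem_empty c)
  by_cases hc : ∃ c ∈ Kk, c ∈ (↑C : Set V)
  · obtain ⟨c, hcKk, hcC⟩ := hc
    have hcU : ∃ j ∈ Finset.Icc 1 C.card, c ∈ K j := by
      rcases hKkmem c hcKk with h | h
      · exact absurd hcC (hB'notC c h)
      · exact h.2
    obtain ⟨j, hj, hcKj⟩ := hcU
    have hj' : j ∈ Finset.Icc 1 (C.card + 1) := by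
      rw [Finset.mem_Icc] at hj ⊢
      omega
    refine ⟨j, hj', Set.subset_univ _, ?_, fun x _ hx => habs j hj' x hx⟩
    intro u hu v hv
    rcases hu with hu | hu <;> rcases hv with hv | hv
    · exact hKk.2.1 u hu v hv
    · rcases hKkmem u hu with huB' | ⟨huC, _⟩
      · rcases hKimem j hj' v hv with hvB | ⟨hvC, _⟩
        · exact (hsep v hvB u huB').2
        · have hvc : v = c := huniq (K j) (hKi j hj').2.1 v hv hvC c hcKj hcC
          rw [hvc]; exact hKk.2.1 u hu c hcKk
      · have huc : u = c := huniq Kk hKk.2.1 u hu huC c hcKk hcC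
        have huKj : u ∈ K j := huc ▸ hcKj
        exact (hKi j hj').2.1 u huKj v hv
    · rcases hKkmem v hv with hvB' | ⟨hvC, _⟩
      · rcases hKimem j hj' u hu with huB | ⟨huC, _⟩
        · exact (hsep u huB v hvB').1
        · have huc : u = c := huniq (K j) (hKi j hj').2.1 u hu huC c hcKj hcC
          rw [huc]; exact hKk.2.1 c hcKk v hv
      · have hvc : v = c := huniq Kk hKk.2.1 v hv hvC c hcKk hcC
        have hvKj : v ∈ K j := hvc ▸ hcKj
        exact (hKi j hj').2.1 u hu v hvKj
    · exact (hKi j hj').2.1 u hu v hv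
  · push_neg at hc
    obtain ⟨i, hi, hiC⟩ := hexI
    have hKkB' : ∀ x ∈ Kk, x ∈ B' := fun x hx =>
      (hKkmem x hx).resolve_right (fun h => hc x hx h.1)
    have hKiB : ∀ x ∈ K i, x ∈ B := fun x hx =>
      (hKimem i hi x hx).resolve_right (fun h => hiC x hx h.1)
    refine ⟨i, hi, Set.subset_univ _, ?_, fun x _ hx => habs i hi x hx⟩
    intro u hu v hv
    rcases hu with hu | hu <;> rcases hv with hv | hv
    · exact hKk.2.1 u hu v hv
    · exact (hsep v (hKiB v hv) u (hKkB' u hu)).2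
    · exact (hsep u (hKiB u hu) v (hKkB' v hv)).1
    · exact (hKi i hi).2.1 u hu v hv
end

section
/- All kernels of an orientation of a claw-free graph have the same cardinality. -/
/-- `G` is claw-free: no vertex has three pairwise non-adjacent neighbors. -/
def IsClawFree {V : Type*} (G : SimpleGraph V) : Prop :=
  ¬ ∃ v a b c : V, a ≠ b ∧ a ≠ c ∧ b ≠ c ∧
    G.Adj v a ∧ G.Adj v b ∧ G.Adj v c ∧
    ¬ G.Adj a b ∧ ¬ G.Adj a c ∧ ¬ G.Adj b c

lemma clawfree_diff_le {V : Type*} [Fintype V]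
    (G : SimpleGraph V) (hcf : IsClawFree G)
    (A : V → V → Prop)
    (hsub : ∀ u v : V, A u v → G.Adj u v)
    (hor : ∀ u v : V, G.Adj u v → (A u v ↔ ¬ A v u))
    (K K' : Set V)
    (hKstable : ∀ u ∈ K, ∀ v ∈ K, ¬ G.Adj u v)
    (hKabsorb : ∀ u ∉ K, ∃ v ∈ K, A u v)
    (hK'absorb : ∀ u ∉ K', ∃ v ∈ K', A u v) :
    (K \ K').ncard ≤ (K' \ K).ncard := by
  have hf : ∀ u : V, ∃ v : V, u ∈ K \ K' → v ∈ K' \ K ∧ A u v := by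
    intro u
    by_cases hu : u ∈ K \ K'
    · obtain ⟨v, hv, hA⟩ := hK'absorb u hu.2
      exact ⟨v, fun _ => ⟨⟨hv, fun hvK => hKstable u hu.1 v hvK (hsub u v hA)⟩, hA⟩⟩
    · exact ⟨u, fun h => absurd h hu⟩
  choose f hf using hf
  apply Set.ncard_le_ncard_of_injOn f (fun u hu => (hf u hu).1) _ (Set.toFinite _)
  intro u1 h1 u2 h2 heq
  by_contra hne
  obtain ⟨hv1, hA1⟩ := hf u1 h1
  obtain ⟨hv2, hA2⟩ := hf u2 h2
  set v := f u1 with hvdef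
  rw [← heq] at hA2
  obtain ⟨w, hwK, hAw⟩ := hKabsorb v hv1.2
  apply hcf
  refine ⟨v, u1, u2, w, hne, ?_, ?_, (hsub u1 v hA1).symm, (hsub u2 v hA2).symm,
    hsub v w hAw, hKstable u1 h1.1 u2 h2.1, hKstable u1 h1.1 w hwK,
    hKstable u2 h2.1 w hwK⟩
  · rintro rfl
    exact ((hor u1 v (hsub u1 v hA1)).mp hA1) hAw
  · rintro rfl
    exact ((hor u2 v (hsub u2 v hA2)).mp hA2) hAw

/-- All kernels of an orientation of a claw-free graph have the same cardinality. -/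
theorem clawfree_kernels_same_card {V : Type*} [Fintype V]
    (G : SimpleGraph V) (hcf : IsClawFree G)
    (A : V → V → Prop)
    (hsub : ∀ u v : V, A u v → G.Adj u v)
    (hor : ∀ u v : V, G.Adj u v → (A u v ↔ ¬ A v u))
    (K K' : Set V)
    (hKstable : ∀ u ∈ K, ∀ v ∈ K, ¬ G.Adj u v)
    (hKabsorb : ∀ u ∉ K, ∃ v ∈ K, A u v)
    (hK'stable : ∀ u ∈ K', ∀ v ∈ K', ¬ G.Adj u v)
    (hK'absorb : ∀ u ∉ K', ∃ v ∈ K', A u v) :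
    K.ncard = K'.ncard := by
  have h1 := clawfree_diff_le G hcf A hsub hor K K' hKstable hKabsorb hK'absorb
  have h2 := clawfree_diff_le G hcf A hsub hor K' K hK'stable hK'absorb hKabsorb
  have hd : (K \ K').ncard = (K' \ K).ncard := le_antisymm h1 h2
  have e1 := Set.ncard_inter_add_ncard_diff_eq_ncard K K' (Set.toFinite _)
  have e2 := Set.ncard_inter_add_ncard_diff_eq_ncard K' K (Set.toFinite _)
  rw [Set.inter_comm] at e2
  omega
end

section
/- Let D be an orientation of a claw-free graph and K, K' two kernels of D. Then every vertex of the induced subgraph on the symmetric difference K Δ K' has degree at most 2 in that subgraph. -/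
/-- In the subgraph induced by the symmetric difference of two kernels of an
orientation of a claw-free graph, every vertex has degree at most 2. -/
theorem clawfree_symmDiff_degree_le_two {V : Type*} [Fintype V]
    (G : SimpleGraph V) (hcf : IsClawFree G)
    (A : V → V → Prop)
    (hsub : ∀ u v : V, A u v → G.Adj u v)
    (hor : ∀ u v : V, G.Adj u v → (A u v ↔ ¬ A v u))
    (K K' : Set V)
    (hKstable : ∀ u ∈ K, ∀ v ∈ K, ¬ G.Adj u v)
    (hKabsorb : ∀ u ∉ K, ∃ v ∈ K, A u v)
    (hK'stable : ∀ u ∈ K', ∀ v ∈ K', ¬ G.Adj u v)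
    (hK'absorb : ∀ u ∉ K', ∃ v ∈ K', A u v) :
    ∀ v ∈ (K \ K') ∪ (K' \ K),
      Set.ncard {u ∈ (K \ K') ∪ (K' \ K) | G.Adj v u} ≤ 2 := by
  intro v hv
  by_contra h
  push_neg at h
  obtain ⟨a, ha, b, hb, c, hc, hab, hac, hbc⟩ :=
    (Set.two_lt_ncard (Set.toFinite _)).mp h
  -- each neighbor lies in the kernel not containing v
  have key : ∀ u, u ∈ {u ∈ (K \ K') ∪ (K' \ K) | G.Adj v u} →
      (v ∈ K \ K' → u ∈ K' \ K) ∧ (v ∈ K' \ K → u ∈ K \ K') := by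
    rintro u ⟨hu, hadj⟩
    constructor
    · intro hvK
      rcases hu with h1 | h1
      · exact absurd hadj (hKstable v hvK.1 u h1.1)
      · exact h1
    · intro hvK'
      rcases hu with h1 | h1
      · exact h1
      · exact absurd hadj (hK'stable v hvK'.1 u h1.1)
  have stab : ∀ x y, x ∈ {u ∈ (K \ K') ∪ (K' \ K) | G.Adj v u} →
      y ∈ {u ∈ (K \ K') ∪ (K' \ K) | G.Adj v u} → ¬ G.Adj x y := by
    intro x y hx hy
    rcases hv with hvK | hvK'
    · exact hK'stable x ((key x hx).1 hvK).1 y ((key y hy).1 hvK).1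
    · exact hKstable x ((key x hx).2 hvK').1 y ((key y hy).2 hvK').1
  exact hcf ⟨v, a, b, c, hab, hac, hbc, ha.2, hb.2, hc.2,
    stab a b ha hb, stab a c ha hc, stab b c hb hc⟩
end

section
/- Let D be an orientation of a claw-free graph and K, K' two distinct kernels of D. Then no vertex of the symmetric difference K Δ K' is a sink of the induced subdigraph D[K Δ K'] (i.e., every vertex of K Δ K' has an out-neighbor in K Δ K'). -/
/-- If `K ≠ K'` are kernels of an orientation of a claw-free graph, then the
induced subdigraph on `K Δ K'` has no sink: every vertex of `K Δ K'` has an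
out-neighbor in `K Δ K'`. -/
theorem clawfree_symmDiff_no_sink {V : Type*}
    (G : SimpleGraph V) (hcf : IsClawFree G)
    (A : V → V → Prop)
    (hsub : ∀ u v : V, A u v → G.Adj u v)
    (hor : ∀ u v : V, G.Adj u v → (A u v ↔ ¬ A v u))
    (K K' : Set V) (hne : K ≠ K')
    (hKstable : ∀ u ∈ K, ∀ v ∈ K, ¬ G.Adj u v)
    (hKabsorb : ∀ u ∉ K, ∃ v ∈ K, A u v)
    (hK'stable : ∀ u ∈ K', ∀ v ∈ K', ¬ G.Adj u v)
    (hK'absorb : ∀ u ∉ K', ∃ v ∈ K', A u v) :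
    ∀ s ∈ (K \ K') ∪ (K' \ K), ∃ u ∈ (K \ K') ∪ (K' \ K), A s u := by
  rintro s (⟨hsK, hsK'⟩ | ⟨hsK', hsK⟩)
  · obtain ⟨v, hvK', hAv⟩ := hK'absorb s hsK'
    exact ⟨v, Or.inr ⟨hvK', fun hvK => hKstable s hsK v hvK (hsub s v hAv)⟩, hAv⟩
  · obtain ⟨v, hvK, hAv⟩ := hKabsorb s hsK
    exact ⟨v, Or.inl ⟨hvK, fun hvK' => hK'stable s hsK' v hvK' (hsub s v hAv)⟩, hAv⟩
end

section
/- Every clique-acyclic orientation of a chordal graph is a digraph without a directed cycle. -/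
/-- `G` has an induced cycle of length `n`. -/
def HasInducedCycle {V : Type*} (G : SimpleGraph V) (n : ℕ) : Prop :=
  ∃ f : Fin n → V, Function.Injective f ∧
    ∀ i j : Fin n, G.Adj (f i) (f j) ↔ (SimpleGraph.cycleGraph n).Adj i j

/-- `G` is chordal: no induced cycle of length 4 or more. -/
def IsChordal {V : Type*} (G : SimpleGraph V) : Prop :=
  ∀ n : ℕ, 4 ≤ n → ¬ HasInducedCycle G n

/-!
A shortest closed directed walk is chordless: a repeated vertex would split it, and an arc
between two of its vertices other than its own arcs would close a strictly shorter closed walk.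
Its vertices therefore induce a cycle of `G`, of length at least `4` since an orientation has no
loops or digons and clique-acyclicity forbids directed triangles; chordality rules this out.
-/

section Walks

variable {V : Type*} {A : V → V → Prop}

variable (A) in
def HasWalkOfLength (n : ℕ) (u w : V) : Prop :=
  ∃ f : ℕ → V, f 0 = u ∧ f n = w ∧ ∀ k < n, A (f k) (f (k + 1))

theorem HasWalkOfLength.single {u w : V} (h : A u w) : HasWalkOfLength A 1 u w :=
  ⟨fun k => if k = 0 then u else w, rfl, rfl, fun k hk => by
    obtain rfl : k = 0 := by omega
    simpa using h⟩

theorem HasWalkOfLength.append {m n : ℕ} {u v w : V} (h₁ : HasWalkOfLength A m u v)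
    (h₂ : HasWalkOfLength A n v w) : HasWalkOfLength A (m + n) u w := by
  obtain ⟨f, rfl, rfl, hf⟩ := h₁
  obtain ⟨g, hg0, rfl, hg⟩ := h₂
  refine ⟨fun k => if k ≤ m then f k else g (k - m), by simp, by simp +contextual [hg0],
    fun k hk => ?_⟩
  rcases lt_or_ge k m with hkm | hkm
  · simpa [hkm.le, Nat.succ_le_of_lt hkm] using hf k hkm
  · obtain ⟨d, rfl⟩ := Nat.exists_eq_add_of_le hkm
    have := hg d (by omega)
    rcases d.eq_zero_or_pos with rfl | hd
    · simpa [hg0] using this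
    · simpa [show ¬ m + d ≤ m by omega, show m + d + 1 - m = d + 1 by omega] using this

theorem hasWalkOfLength_segment {f : ℕ → V} {n p q : ℕ} (hf : ∀ k < n, A (f k) (f (k + 1)))
    (hpq : p ≤ q) (hq : q ≤ n) : HasWalkOfLength A (q - p) (f p) (f q) :=
  ⟨fun k => f (p + k), rfl, congrArg f (Nat.add_sub_cancel' hpq),
    fun k hk => hf (p + k) (by omega)⟩

theorem exists_hasWalkOfLength_of_transGen {u w : V} (h : Relation.TransGen A u w) :
    ∃ n, 0 < n ∧ HasWalkOfLength A n u w := by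
  induction h with
  | single h => exact ⟨1, one_pos, .single h⟩
  | tail _ h ih =>
    obtain ⟨n, hn, hw⟩ := ih
    exact ⟨n + 1, n.succ_pos, hw.append (.single h)⟩

end Walks

theorem Fin.eq_add_one_iff_val {n : ℕ} {i j : Fin (n + 1)} :
    j = i + 1 ↔ (j : ℕ) = i + 1 ∨ ((i : ℕ) = n ∧ (j : ℕ) = 0) := by
  rw [Fin.ext_iff, Fin.val_add_one]
  split_ifs with h
  · rw [h, Fin.val_last]
    omega
  · have : (i : ℕ) ≠ n := fun h' => h (Fin.ext h')
    omega

section ShortestClosedWalk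

variable {V : Type*} {A : V → V → Prop} {f : ℕ → V} {n : ℕ}

theorem ne_of_shortest_closed_walk (hf : ∀ k < n + 1, A (f k) (f (k + 1)))
    (hmin : ∀ m u, 0 < m → HasWalkOfLength A m u u → n + 1 ≤ m) {p q : ℕ} (hpq : p < q)
    (hq : q ≤ n) : f p ≠ f q := by
  intro h
  have hw := hasWalkOfLength_segment hf hpq.le (by omega)
  rw [← h] at hw
  have := hmin _ _ (by omega) hw
  omega

theorem eq_succ_of_shortest_closed_walk (hf : ∀ k < n + 1, A (f k) (f (k + 1)))
    (hcl : f (n + 1) = f 0) (hmin : ∀ m u, 0 < m → HasWalkOfLength A m u u → n + 1 ≤ m)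
    {p q : ℕ} (hp : p ≤ n) (hq : q ≤ n) (h : A (f p) (f q)) : q = p + 1 ∨ (p = n ∧ q = 0) := by
  rcases lt_trichotomy p q with hpq | rfl | hqp
  · -- the chord closes the walk `q → ⋯ → n + 1 ≡ 0 → ⋯ → p → q`
    have hw₁ := hasWalkOfLength_segment hf (by omega : q ≤ n + 1) le_rfl
    rw [hcl] at hw₁
    have hw₂ := hasWalkOfLength_segment hf (Nat.zero_le p) (by omega)
    have := hmin _ _ (by omega) ((hw₁.append hw₂).append (.single h))
    omega
  · have := hmin _ _ one_pos (.single h)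
    omega
  · have hw := hasWalkOfLength_segment hf hqp.le (by omega)
    have := hmin _ _ (by omega) (hw.append (.single h))
    omega

end ShortestClosedWalk

theorem exists_chordless_cycle_of_transGen {V : Type*} {A : V → V → Prop} {v : V}
    (h : Relation.TransGen A v v) :
    ∃ n, ∃ g : Fin (n + 1) → V, Function.Injective g ∧ ∀ i j, A (g i) (g j) ↔ j = i + 1 := by
  classical
  have hex : ∃ N, 0 < N ∧ ∃ u, HasWalkOfLength A N u u :=
    (exists_hasWalkOfLength_of_transGen h).imp fun _ hN => ⟨hN.1, v, hN.2⟩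
  obtain ⟨N, ⟨hN, u, f, hf0, hfN, hf⟩, hmin⟩ : ∃ N, (0 < N ∧ ∃ u, HasWalkOfLength A N u u) ∧
      ∀ m u, 0 < m → HasWalkOfLength A m u u → N ≤ m :=
    ⟨Nat.find hex, Nat.find_spec hex, fun m u hm hw => Nat.find_min' hex ⟨hm, u, hw⟩⟩
  obtain ⟨n, rfl⟩ : ∃ n, N = n + 1 := ⟨N - 1, by omega⟩
  have hcl : f (n + 1) = f 0 := hfN.trans hf0.symm
  refine ⟨n, fun i => f i, fun i j hij => ?_, fun i j => ?_⟩
  · rcases lt_trichotomy (i : ℕ) j with hlt | heq | hgt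
    · exact absurd hij (ne_of_shortest_closed_walk hf hmin hlt (by omega))
    · exact Fin.ext heq
    · exact absurd hij.symm (ne_of_shortest_closed_walk hf hmin hgt (by omega))
  · rw [Fin.eq_add_one_iff_val]
    refine ⟨eq_succ_of_shortest_closed_walk hf hcl hmin (by omega) (by omega), ?_⟩
    rintro (hj | ⟨hi, hj⟩)
    · simpa only [hj] using hf i (by omega)
    · simpa only [hi, hj, hcl] using hf n (by omega)

theorem SimpleGraph.adj_iff_of_orientation {V : Type*} {G : SimpleGraph V} {A : V → V → Prop}
    (hsub : ∀ u v, A u v → G.Adj u v) (hor : ∀ u v, G.Adj u v → (A u v ↔ ¬ A v u)) {u v : V} :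
    G.Adj u v ↔ A u v ∨ A v u := by
  refine ⟨fun h => ?_, fun h => h.elim (hsub u v) fun h => (hsub v u h).symm⟩
  have := hor u v h
  tauto

/-- Every clique-acyclic orientation of a chordal graph has no directed cycle. -/
theorem chordal_clique_acyclic_orientation_acyclic {V : Type*}
    (G : SimpleGraph V) (hchordal : IsChordal G)
    (A : V → V → Prop)
    (hsub : ∀ u v : V, A u v → G.Adj u v)
    (hor : ∀ u v : V, G.Adj u v → (A u v ↔ ¬ A v u))
    (hca : ¬ ∃ a b c : V, A a b ∧ A b c ∧ A c a) :
    ∀ v : V, ¬ Relation.TransGen A v v := by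
  intro v hv
  obtain ⟨n, g, hg, harc⟩ := exists_chordless_cycle_of_transGen hv
  have hn : 3 ≤ n := by
    by_contra! hn
    interval_cases n
    · exact G.irrefl (hsub _ _ ((harc 0 0).2 rfl))
    · have h₀₁ := (harc 0 1).2 rfl
      exact (hor _ _ (hsub _ _ h₀₁)).1 h₀₁ ((harc 1 0).2 rfl)
    · exact hca ⟨g 0, g 1, g 2, (harc 0 1).2 rfl, (harc 1 2).2 rfl, (harc 2 0).2 rfl⟩
  obtain ⟨m, rfl⟩ : ∃ m, n = m + 3 := ⟨n - 3, by omega⟩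
  refine hchordal (m + 4) (by omega) ⟨g, hg, fun i j => ?_⟩
  rw [G.adj_iff_of_orientation hsub hor, harc, harc, SimpleGraph.cycleGraph_adj,
    sub_eq_iff_eq_add', sub_eq_iff_eq_add', or_comm]
end

section
/- If K and K' are two distinct kernels of an orientation D of a chordal graph G, then the induced subdigraph D[K Δ K'] is nonempty and has no directed cycle, hence contains a sink; and any such sink s (say s ∈ K \ K') is not absorbed by K', contradicting that K' is a kernel. Consequently no orientation of a chordal graph has two distinct kernels. -/
/-- A periodic directed closed walk of period `k + 1` staying in `S`. -/
private def ClosedWalk {V : Type*} (A : V → V → Prop) (S : Set V) (k : ℕ) : Prop :=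
  ∃ f : ℕ → V, (∀ n, f (n + (k + 1)) = f n) ∧ (∀ n, f n ∈ S) ∧ (∀ n, A (f n) (f (n + 1)))

private lemma splice {V : Type*} {A : V → V → Prop} {S : Set V} (q : ℕ) (g : ℕ → V)
    (hq : 0 < q) (hgS : ∀ n, g n ∈ S) (hgA : ∀ n, n + 1 < q → A (g n) (g (n + 1)))
    (hlast : A (g (q - 1)) (g 0)) : ClosedWalk A S (q - 1) := by
  refine ⟨fun n => g (n % q), ?_, fun n => hgS _, ?_⟩
  · intro n
    have hq1 : q - 1 + 1 = q := Nat.succ_pred_eq_of_pos hq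
    simp only [hq1, Nat.add_mod_right]
  · intro n
    have h1 : (n + 1) % q = (n % q + 1) % q := by
      conv_lhs => rw [← Nat.mod_add_div n q, Nat.add_right_comm, Nat.add_mul_mod_self_left]
    have hr : n % q < q := Nat.mod_lt _ hq
    by_cases hlt : n % q + 1 < q
    · show A (g (n % q)) (g ((n + 1) % q))
      rw [h1, Nat.mod_eq_of_lt hlt]
      exact hgA _ hlt
    · have hq1 : n % q = q - 1 := by omega
      show A (g (n % q)) (g ((n + 1) % q))
      rw [h1, hq1, show q - 1 + 1 = q from by omega, Nat.mod_self]
      exact hlast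

private lemma mod_helper {p a b : ℕ} (hp : 2 ≤ p) (ha : a < p) (hb : b < p) :
    ((p - a) + b) % p = 1 ↔ (b = a + 1 ∨ (a = p - 1 ∧ b = 0)) := by
  rcases le_or_gt a b with h | h
  · have h2 : (p - a) + b = (b - a) + p := by omega
    rw [h2, Nat.add_mod_right, Nat.mod_eq_of_lt (by omega)]
    omega
  · rw [Nat.mod_eq_of_lt (by omega)]
    omega

/-- If `K` and `K'` are kernels of an orientation of a chordal graph and `K ≠ K'`,
then `D[K Δ K']` is nonempty, has no directed cycle, hence has a sink; any such
sink lying in `K \ K'` is not absorbed by `K'`; consequently `K = K'`. -/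
theorem chordal_orientation_unique_kernel_detail {V : Type*} [Fintype V]
    (G : SimpleGraph V) (hchordal : IsChordal G)
    (A : V → V → Prop)
    (hsub : ∀ u v : V, A u v → G.Adj u v)
    (hor : ∀ u v : V, G.Adj u v → (A u v ↔ ¬ A v u))
    (K K' : Set V)
    (hKstable : ∀ u ∈ K, ∀ v ∈ K, ¬ G.Adj u v)
    (hKabsorb : ∀ u ∉ K, ∃ v ∈ K, A u v)
    (hK'stable : ∀ u ∈ K', ∀ v ∈ K', ¬ G.Adj u v)
    (hK'absorb : ∀ u ∉ K', ∃ v ∈ K', A u v) :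
    (K ≠ K' →
      ((K \ K') ∪ (K' \ K)).Nonempty ∧
      (∀ v : V, ¬ Relation.TransGen
        (fun a b => a ∈ (K \ K') ∪ (K' \ K) ∧ b ∈ (K \ K') ∪ (K' \ K) ∧ A a b) v v) ∧
      (∃ s ∈ (K \ K') ∪ (K' \ K), ∀ u ∈ (K \ K') ∪ (K' \ K), ¬ A s u) ∧
      (∀ s ∈ (K \ K') ∪ (K' \ K), (∀ u ∈ (K \ K') ∪ (K' \ K), ¬ A s u) →
        s ∈ K \ K' → ¬ ∃ v ∈ K', A s v)) ∧
    K = K' := by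
  classical
  have hKK : K = K' := by
    by_contra hne
    set S : Set V := (K \ K') ∪ (K' \ K) with hSdef
    -- S is nonempty
    obtain ⟨x, hx⟩ : ∃ x, x ∈ S := by
      by_contra h
      push_neg at h
      apply hne
      ext v
      constructor
      · intro hv
        by_contra hv'
        exact h v (Or.inl ⟨hv, hv'⟩)
      · intro hv
        by_contra hv'
        exact h v (Or.inr ⟨hv, hv'⟩)
    -- every vertex of S has an A-out-neighbor in S
    have hout : ∀ v ∈ S, ∃ w ∈ S, A v w := by
      intro v hv
      rcases hv with ⟨hvK, hvK'⟩ | ⟨hvK', hvK⟩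
      · obtain ⟨w, hwK', hAw⟩ := hK'absorb v hvK'
        have hadj := hsub _ _ hAw
        have hwK : w ∉ K := fun hwK => hKstable v hvK w hwK hadj
        exact ⟨w, Or.inr ⟨hwK', hwK⟩, hAw⟩
      · obtain ⟨w, hwK, hAw⟩ := hKabsorb v hvK
        have hadj := hsub _ _ hAw
        have hwK' : w ∉ K' := fun h => hK'stable v hvK' w h hadj
        exact ⟨w, Or.inl ⟨hwK, hwK'⟩, hAw⟩
    -- an A-arc inside S crosses between the two parts
    have hcross : ∀ v w, v ∈ S → w ∈ S → A v w → (v ∈ K \ K' ↔ w ∈ K' \ K) := by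
      intro v w hv hw hA'
      have hadj := hsub _ _ hA'
      constructor
      · intro hv1
        rcases hw with h | h
        · exact absurd hadj (hKstable v hv1.1 w h.1)
        · exact h
      · intro hw1
        rcases hv with h | h
        · exact h
        · exact absurd hadj (hK'stable v h.1 w hw1.1)
    have hparts : ∀ v ∈ S, (v ∈ K \ K' ↔ ¬ v ∈ K' \ K) := by
      intro v hv
      constructor
      · rintro ⟨h1, h2⟩ ⟨h3, h4⟩
        exact h2 h3
      · intro h
        rcases hv with h' | h'
        · exact h'
        · exact absurd h' h
    -- build an infinite walk in S
    have hout' : ∀ v : S, ∃ w : S, A v.1 w.1 := by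
      rintro ⟨v, hv⟩
      obtain ⟨w, hw, hA'⟩ := hout v hv
      exact ⟨⟨w, hw⟩, hA'⟩
    choose step hstep using hout'
    let g0 : ℕ → S := fun n => step^[n] ⟨x, hx⟩
    have hg0 : ∀ n, A (g0 n).1 (g0 (n + 1)).1 := by
      intro n
      have h1 : g0 (n + 1) = step (g0 n) := Function.iterate_succ_apply' step n _
      rw [h1]
      exact hstep _
    -- pigeonhole: a repeated vertex
    obtain ⟨a, b, hab, hfab⟩ : ∃ a b, a < b ∧ g0 a = g0 b := by
      obtain ⟨m, n, hmn, heq⟩ := Finite.exists_ne_map_eq_of_infinite g0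
      rcases hmn.lt_or_gt with h | h
      · exact ⟨m, n, h, heq⟩
      · exact ⟨n, m, h, heq.symm⟩
    -- hence a closed walk exists
    have hex : ∃ k, ClosedWalk A S k := by
      refine ⟨b - a - 1, ?_⟩
      have h1 : b - a - 1 = b - a - 1 := rfl
      have := splice (b - a) (fun t => (g0 (a + t)).1) (by omega)
        (fun t => (g0 (a + t)).2) (fun t ht => hg0 (a + t)) ?_
      · have h2 : b - a - 1 = b - a - 1 := rfl
        exact this
      · show A ((g0 (a + (b - a - 1))).1) ((g0 (a + 0)).1)
        have h2 := hg0 (b - 1)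
        rw [show b - 1 + 1 = b from by omega] at h2
        rw [show a + (b - a - 1) = b - 1 from by omega, show a + 0 = a from rfl, hfab]
        exact h2
    -- a minimal closed walk
    have hPk := Nat.find_spec hex
    have hmin : ∀ j < Nat.find hex, ¬ ClosedWalk A S j := fun j hj => Nat.find_min hex hj
    set k0 := Nat.find hex with hk0def
    obtain ⟨f, hper, hfS, hfA⟩ := hPk
    set p := k0 + 1 with hp
    -- general periodicity
    have hperiodic : ∀ t n, f (n + p * t) = f n := by
      intro t
      induction t with
      | zero => intro n; simp
      | succ t ih =>
        intro n
        have h1 : n + p * (t + 1) = (n + p) + p * t := by ring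
        rw [h1, ih, hper]
    have h3 : ∀ c, f (c + p) = f c := by
      intro c
      have := hperiodic 1 c
      simpa using this
    have hfp : f p = f 0 := by
      have := h3 0
      rwa [Nat.zero_add] at this
    -- p ≥ 3
    have hk02 : 2 ≤ k0 := by
      by_contra hcon
      have h01 := hfA 0
      have hk01 : k0 = 0 ∨ k0 = 1 := by omega
      rcases hk01 with h | h
      · have hq : p = 1 := by omega
        have h4 : f 1 = f 0 := by rw [← hq]; exact hfp
        exact (hsub _ _ h01).ne h4.symm
      · have hq : p = 2 := by omega
        have h12 := hfA 1
        have h4 : f 2 = f 0 := by rw [← hq]; exact hfp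
        rw [show (1:ℕ) + 1 = 2 from rfl, h4] at h12
        exact (hor _ _ (hsub _ _ h01)).mp h01 h12
    -- injectivity on a period
    have hinj : ∀ a b, a < b → b < p → f a ≠ f b := by
      intro a b hab hbp hfe
      have h2 := hfA (a + p - 1)
      rw [show a + p - 1 + 1 = a + p from by omega] at h2
      refine hmin (p - (b - a) - 1) (by omega)
        ((show p - (b - a) - 1 + 1 - 1 = p - (b - a) - 1 from rfl) ▸
          splice (p - (b - a)) (fun t => f (b + t)) (by omega) (fun t => hfS _)
          (fun t ht => hfA _) ?_)
      show A (f (b + (p - (b - a) - 1))) (f (b + 0))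
      rw [show b + (p - (b - a) - 1) = a + p - 1 from by omega,
        show b + 0 = b from rfl, ← hfe, ← h3 a]
      exact h2
    -- no chords
    have hnochord : ∀ a b, a < b → b < p → b ≠ a + 1 → ¬(a = 0 ∧ b = p - 1) →
        ¬ G.Adj (f a) (f b) := by
      intro a b hab hbp hne1 hne2 hadj
      by_cases hA1 : A (f a) (f b)
      · refine hmin (p - (b - a)) (by omega)
          (splice (p - (b - a) + 1) (fun t => f (b + t)) (by omega) (fun t => hfS _)
            (fun t ht => hfA _) ?_)
        show A (f (b + (p - (b - a) + 1 - 1))) (f (b + 0))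
        rw [show b + (p - (b - a) + 1 - 1) = a + p from by omega,
          show b + 0 = b from rfl, h3 a]
        exact hA1
      · have hA2 : A (f b) (f a) := by
          by_contra h
          exact hA1 ((hor _ _ hadj).mpr h)
        refine hmin (b - a) (by omega)
          (splice (b - a + 1) (fun t => f (a + p + t)) (by omega) (fun t => hfS _)
            (fun t ht => hfA _) ?_)
        show A (f (a + p + (b - a + 1 - 1))) (f (a + p + 0))
        rw [show a + p + (b - a + 1 - 1) = b + p from by omega,
          show a + p + 0 = a + p from rfl, h3 a, h3 b]
        exact hA2
    -- alternation / parity : p is even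
    have halt : ∀ n, (f n ∈ K \ K') ↔ ¬ (f (n + 1) ∈ K \ K') := by
      intro n
      have h1 := hcross (f n) (f (n + 1)) (hfS n) (hfS (n + 1)) (hfA n)
      have h2 := hparts (f (n + 1)) (hfS (n + 1))
      tauto
    have hpar : ∀ n, (f n ∈ K \ K') ↔ ((f 0 ∈ K \ K') ↔ Even n) := by
      intro n
      induction n with
      | zero => simp
      | succ n ih =>
        have h1 := halt n
        rw [Nat.even_add_one]
        tauto
    have hpeven : Even p := by
      by_contra hodd
      have h1 := hpar p
      rw [hfp] at h1
      have h0 := hpar 0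
      tauto
    have hp4 : 4 ≤ p := by
      rcases hpeven with ⟨t, ht⟩
      omega
    -- induced cycle of length p, contradiction with chordality
    apply hchordal p hp4
    refine ⟨fun i => f i.val, ?_, ?_⟩
    · intro i j hij
      by_contra hne'
      have hv : i.val ≠ j.val := fun h => hne' (Fin.ext h)
      rcases hv.lt_or_gt with h | h
      · exact hinj _ _ h j.isLt hij
      · exact hinj _ _ h i.isLt hij.symm
    · intro i j
      show G.Adj (f i.val) (f j.val) ↔ (SimpleGraph.cycleGraph p).Adj i j
      rw [SimpleGraph.cycleGraph_adj']
      have e1 : (i - j).val = ((p - j.val) + i.val) % p := by rw [Fin.sub_def]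
      have e2 : (j - i).val = ((p - i.val) + j.val) % p := by rw [Fin.sub_def]
      rw [e1, e2, show ((p - j.val) + i.val) % p = 1 ↔ _ from
          mod_helper (by omega) j.isLt i.isLt,
        show ((p - i.val) + j.val) % p = 1 ↔ _ from mod_helper (by omega) i.isLt j.isLt]
      constructor
      · intro hadj
        by_contra hcon
        push_neg at hcon
        rcases lt_trichotomy i.val j.val with h | h | h
        · exact hnochord i.val j.val h j.isLt (by omega) (by omega) hadj
        · exact hadj.ne (congrArg f h)
        · exact hnochord j.val i.val h i.isLt (by omega) (by omega) hadj.symm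
      · intro hcons
        rcases hcons with (h | ⟨h1, h2⟩) | (h | ⟨h1, h2⟩)
        · have := hsub _ _ (hfA j.val)
          rw [h]
          exact this.symm
        · have := hsub _ _ (hfA (p - 1))
          rw [show p - 1 + 1 = p from by omega, hfp] at this
          rw [h1, h2]
          exact this.symm
        · have := hsub _ _ (hfA i.val)
          rw [h]
          exact this
        · have := hsub _ _ (hfA (p - 1))
          rw [show p - 1 + 1 = p from by omega, hfp] at this
          rw [h1, h2]
          exact this
  exact ⟨fun hne => absurd hKK hne, hKK⟩
end
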